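/- Let X be a finite subset of the unit sphere S² with separation radius q > 0 (i.e., any two distinct points of X have geodesic distance at least 2q). Then for any x ∈ X and any n ≥ 1, the number of points y ∈ X with n·q ≤ dist(x,y) ≤ (n+1)·q is at most 9π²n. -/

import Mathlib

open Real
open scoped RealInnerProductSpace

/-- The geodesic distance on the unit sphere `S²`. -/
noncomputable def geoDist (x y : EuclideanSpace ℝ (Fin 3)) : ℝ :=
  Real.arccos ⟪x, y⟫

lemma cos_gap (q : ℝ) (hq : 0 < q) (hq2 : q ≤ π / 2) :
    π ^ 2 * q ^ 2 / 50 < Real.cos q - Real.cos (2 * q) := by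
  have hπ := Real.pi_pos
  have hc1 : Real.cos q ≤ 1 - 2 / π ^ 2 * q ^ 2 :=
    Real.cos_le_one_sub_mul_cos_sq (by rw [abs_of_nonneg hq.le]; linarith)
  have hc0 : 0 ≤ Real.cos q := Real.cos_nonneg_of_mem_Icc ⟨by linarith, hq2⟩
  have hπ2 : (0 : ℝ) < π ^ 2 := by positivity
  have hp2 : π ^ 2 < 3.15 ^ 2 := by nlinarith [Real.pi_lt_d2, Real.pi_pos]
  have hπ4 : π ^ 4 < 100 := by nlinarith [hp2, sq_nonneg π, hπ2]
  have c2 : Real.cos (2 * q) = 2 * Real.cos q ^ 2 - 1 := Real.cos_two_mul q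
  have hc1' : 2 * q ^ 2 ≤ π ^ 2 * (1 - Real.cos q) := by
    have h := mul_le_mul_of_nonneg_left
      (show 2 / π ^ 2 * q ^ 2 ≤ 1 - Real.cos q by linarith) hπ2.le
    have heq : π ^ 2 * (2 / π ^ 2 * q ^ 2) = 2 * q ^ 2 := by field_simp
    linarith
  rw [c2, div_lt_iff₀ (by norm_num : (0:ℝ) < 50)]
  nlinarith [hc1', hc0, hπ4, mul_pos hq hq,
    mul_le_mul_of_nonneg_left hc1' (by linarith : (0:ℝ) ≤ 1 + 2 * Real.cos q),
    mul_nonneg hc0 (sq_nonneg q), hπ2]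

lemma annulus_key (q : ℝ) (n : ℕ) (hn : 1 ≤ n) (hq : 0 < q) (hq2 : q ≤ π / 2)
    (θ θ' δ : ℝ) (hθ0 : 0 ≤ θ) (hθπ : θ ≤ π) (hθ'0 : 0 ≤ θ') (hθ'π : θ' ≤ π)
    (h1 : n * q ≤ θ) (h2 : θ ≤ (n + 1) * q) (h1' : n * q ≤ θ') (h2' : θ' ≤ (n + 1) * q)
    (hδ : |δ| ≤ 2 * π / (20 * n)) :
    Real.cos (2 * q) < Real.cos θ * Real.cos θ' + Real.sin θ * Real.sin θ' * Real.cos δ := by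
  have hπ := Real.pi_pos
  have hn1 : (1 : ℝ) ≤ n := by exact_mod_cast hn
  have hn0 : (0 : ℝ) < n := by linarith
  have hsθ0 : 0 ≤ Real.sin θ := Real.sin_nonneg_of_nonneg_of_le_pi hθ0 hθπ
  have hsθ'0 : 0 ≤ Real.sin θ' := Real.sin_nonneg_of_nonneg_of_le_pi hθ'0 hθ'π
  have hsθ : Real.sin θ ≤ 2 * n * q := (Real.sin_le hθ0).trans (by nlinarith)
  have hsθ' : Real.sin θ' ≤ 2 * n * q := (Real.sin_le hθ'0).trans (by nlinarith)
  have hδ2 : δ ^ 2 ≤ (2 * π / (20 * n)) ^ 2 := by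
    rw [← sq_abs]
    exact pow_le_pow_left₀ (abs_nonneg δ) hδ 2
  have hcosδ : 1 - Real.cos δ ≤ δ ^ 2 / 2 := by
    have := Real.one_sub_sq_div_two_le_cos (x := δ); linarith
  have hcosδ0 : 0 ≤ 1 - Real.cos δ := by have := Real.cos_le_one δ; linarith
  have hA : Real.sin θ * Real.sin θ' * (1 - Real.cos δ) ≤ π ^ 2 * q ^ 2 / 50 := by
    have ha : Real.sin θ * Real.sin θ' ≤ (2 * n * q) * (2 * n * q) :=
      mul_le_mul hsθ hsθ' hsθ'0 (by positivity)
    have hb : Real.sin θ * Real.sin θ' * (1 - Real.cos δ)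
        ≤ ((2 * n * q) * (2 * n * q)) * (δ ^ 2 / 2) :=
      mul_le_mul ha hcosδ hcosδ0 (by positivity)
    have hc : ((2 * n * q) * (2 * n * q)) * (δ ^ 2 / 2)
        ≤ ((2 * n * q) * (2 * n * q)) * ((2 * π / (20 * n)) ^ 2 / 2) := by
      apply mul_le_mul_of_nonneg_left _ (by positivity)
      linarith
    have hd : ((2 * (n : ℝ) * q) * (2 * n * q)) * ((2 * π / (20 * n)) ^ 2 / 2)
        = π ^ 2 * q ^ 2 / 50 := by
      field_simp
      ring
    linarith
  have hcs : Real.cos q ≤ Real.cos θ * Real.cos θ' + Real.sin θ * Real.sin θ' := by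
    have habs : |θ - θ'| ≤ q := abs_le.mpr ⟨by linarith, by linarith⟩
    have := Real.cos_le_cos_of_nonneg_of_le_pi (abs_nonneg (θ - θ')) (by linarith) habs
    rwa [Real.cos_abs, Real.cos_sub] at this
  have key2 := cos_gap q hq hq2
  nlinarith [hA, hcs, key2]

/-- If `X ⊂ S²` is finite with separation radius `q > 0` (distinct points at geodesic
distance at least `2q`), then for `x ∈ X` and `n ≥ 1` the number of points `y ∈ X` with
`n·q ≤ dist(x,y) ≤ (n+1)·q` is at most `9π²n`. -/
theorem card_annulus_le (X : Finset (EuclideanSpace ℝ (Fin 3)))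
    (hX : ∀ x ∈ X, x ∈ Metric.sphere (0 : EuclideanSpace ℝ (Fin 3)) 1)
    (q : ℝ) (hq : 0 < q)
    (hsep : ∀ x ∈ X, ∀ y ∈ X, x ≠ y → 2 * q ≤ geoDist x y)
    (x : EuclideanSpace ℝ (Fin 3)) (hx : x ∈ X) (n : ℕ) (hn : 1 ≤ n) :
    ((X.filter fun y => n * q ≤ geoDist x y ∧ geoDist x y ≤ (n + 1) * q).card : ℝ)
      ≤ 9 * π ^ 2 * n := by
  have hπ := Real.pi_pos
  have hn1 : (1 : ℝ) ≤ n := by exact_mod_cast hn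
  have hn0 : (0 : ℝ) < n := by linarith
  set S := X.filter fun y => n * q ≤ geoDist x y ∧ geoDist x y ≤ (n + 1) * q with hSdef
  rcases S.eq_empty_or_nonempty with hS | ⟨y0, hy0⟩
  · rw [hS]
    simp
    positivity
  have hnorm : ∀ y ∈ X, ‖y‖ = 1 := fun y hy => mem_sphere_zero_iff_norm.mp (hX y hy)
  have hxn : ‖x‖ = 1 := hnorm x hx
  have hCS : ∀ y ∈ X, ∀ y' ∈ X, |⟪y, y'⟫| ≤ 1 := by
    intro y hy y' hy'
    have h := abs_real_inner_le_norm y y'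
    rw [hnorm y hy, hnorm y' hy'] at h
    simpa using h
  obtain ⟨hy0X, hy0lo, hy0hi⟩ := Finset.mem_filter.mp hy0
  have hxy0 : x ≠ y0 := by
    rintro rfl
    have h1 : ⟪x, x⟫ = 1 := by rw [real_inner_self_eq_norm_sq, hxn]; norm_num
    have h0 : geoDist x x = 0 := by simp only [geoDist]; rw [h1, Real.arccos_one]
    rw [h0] at hy0lo
    nlinarith
  have hq2 : q ≤ π / 2 := by
    have h1 := hsep x hx y0 hy0X hxy0
    have h2 : geoDist x y0 ≤ π := Real.arccos_le_pi _
    linarith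
  have hsep' : ∀ y ∈ X, ∀ y' ∈ X, y ≠ y' → ⟪y, y'⟫ ≤ Real.cos (2 * q) := by
    intro y hy y' hy' hne
    have h1 := hsep y hy y' hy' hne
    have h2 : geoDist y y' ≤ π := Real.arccos_le_pi _
    have habs := abs_le.mp (hCS y hy y' hy')
    have h3 : Real.cos (geoDist y y') ≤ Real.cos (2 * q) :=
      Real.cos_le_cos_of_nonneg_of_le_pi (by linarith) h2 h1
    have h4 : Real.cos (geoDist y y') = ⟪y, y'⟫ := by
      simp only [geoDist]; exact Real.cos_arccos habs.1 habs.2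
    rwa [h4] at h3
  -- orthonormal basis with first vector x
  obtain ⟨b, hb⟩ := Orthonormal.exists_orthonormalBasis_extension_of_card_eq
      (𝕜 := ℝ) (E := EuclideanSpace ℝ (Fin 3)) (by simp)
      (v := fun _ : Fin 3 => x) (s := {0})
      (by
        constructor
        · intro i
          simpa using hxn
        · intro i j hij
          exact absurd (Subtype.ext ((Set.mem_singleton_iff.mp i.2).trans
            (Set.mem_singleton_iff.mp j.2).symm)) hij)
  have hb0 : b 0 = x := hb 0 rfl
  have parseval : ∀ y y' : EuclideanSpace ℝ (Fin 3),
      ⟪y, y'⟫ = ⟪x, y⟫ * ⟪x, y'⟫ + ⟪b 1, y⟫ * ⟪b 1, y'⟫ + ⟪b 2, y⟫ * ⟪b 2, y'⟫ := by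
    intro y y'
    have h := b.sum_inner_mul_inner y y'
    rw [Fin.sum_univ_three, hb0] at h
    rw [← h, real_inner_comm y x, real_inner_comm y (b 1), real_inner_comm y (b 2)]
  have unit : ∀ y ∈ X, ⟪x, y⟫ ^ 2 + ⟪b 1, y⟫ ^ 2 + ⟪b 2, y⟫ ^ 2 = 1 := by
    intro y hy
    have h := parseval y y
    rw [real_inner_self_eq_norm_sq, hnorm y hy] at h
    nlinarith [h]
  set z : EuclideanSpace ℝ (Fin 3) → ℂ :=
    fun y => (⟪b 1, y⟫ : ℂ) + (⟪b 2, y⟫ : ℂ) * Complex.I with hz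
  have hre : ∀ y, (z y).re = ⟪b 1, y⟫ := by intro y; simp [hz]
  have him : ∀ y, (z y).im = ⟪b 2, y⟫ := by intro y; simp [hz]
  have habsz : ∀ y ∈ X, ‖z y‖ = Real.sin (geoDist x y) := by
    intro y hy
    have hu := unit y hy
    simp only [geoDist]
    rw [Real.sin_arccos, Complex.norm_def, Complex.normSq_apply, hre, him]
    congr 1
    nlinarith [hu]
  have hAc : ∀ y, ⟪b 1, y⟫ = ‖z y‖ * Real.cos ((z y).arg) := by
    intro y; rw [← hre y]; exact (Complex.norm_mul_cos_arg (z y)).symm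
  have hBc : ∀ y, ⟪b 2, y⟫ = ‖z y‖ * Real.sin ((z y).arg) := by
    intro y; rw [← him y]; exact (Complex.norm_mul_sin_arg (z y)).symm
  have hinner : ∀ y ∈ X, ∀ y' ∈ X, ⟪y, y'⟫ =
      Real.cos (geoDist x y) * Real.cos (geoDist x y') +
      Real.sin (geoDist x y) * Real.sin (geoDist x y') *
        Real.cos ((z y).arg - (z y').arg) := by
    intro y hy y' hy'
    have hcs := abs_le.mp (hCS x hx y hy)
    have hcs' := abs_le.mp (hCS x hx y' hy')
    have ht : Real.cos (geoDist x y) = ⟪x, y⟫ := by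
      simp only [geoDist]; exact Real.cos_arccos hcs.1 hcs.2
    have ht' : Real.cos (geoDist x y') = ⟪x, y'⟫ := by
      simp only [geoDist]; exact Real.cos_arccos hcs'.1 hcs'.2
    rw [parseval y y', ht, ht', hAc y, hAc y', hBc y, hBc y', habsz y hy, habsz y' hy',
      Real.cos_sub]
    ring
  -- the binning function
  set f : EuclideanSpace ℝ (Fin 3) → ℤ :=
    fun y => ⌈((z y).arg + π) * (20 * n) / (2 * π)⌉ with hf
  have hmaps : ∀ y ∈ S, f y ∈ Finset.Icc (1 : ℤ) (20 * n) := by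
    intro y hy
    have h1 : -π < (z y).arg := Complex.neg_pi_lt_arg _
    have h2 : (z y).arg ≤ π := Complex.arg_le_pi _
    simp only [hf]
    rw [Finset.mem_Icc]
    constructor
    · have hpos : (0 : ℝ) < ((z y).arg + π) * (20 * n) / (2 * π) :=
        div_pos (mul_pos (by linarith) (by positivity)) (by positivity)
      have := Int.ceil_pos.mpr hpos
      omega
    · apply Int.ceil_le.mpr
      push_cast
      rw [div_le_iff₀ (by positivity)]
      nlinarith [mul_nonneg (show (0:ℝ) ≤ π - (z y).arg by linarith)
        (show (0:ℝ) ≤ 20 * (n:ℝ) by positivity)]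
  have hinj : Set.InjOn f ↑S := by
    intro y hyS y' hy'S hfe
    by_contra hne
    obtain ⟨hyX, hylo, hyhi⟩ := Finset.mem_filter.mp (Finset.mem_coe.mp hyS)
    obtain ⟨hy'X, hy'lo, hy'hi⟩ := Finset.mem_filter.mp (Finset.mem_coe.mp hy'S)
    simp only [hf] at hfe
    set φ := (z y).arg with hφ
    set φ' := (z y').arg with hφ'
    have hu1 := Int.le_ceil ((φ + π) * (20 * (n:ℝ)) / (2 * π))
    have hu2 := Int.ceil_lt_add_one ((φ + π) * (20 * (n:ℝ)) / (2 * π))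
    have hu1' := Int.le_ceil ((φ' + π) * (20 * (n:ℝ)) / (2 * π))
    have hu2' := Int.ceil_lt_add_one ((φ' + π) * (20 * (n:ℝ)) / (2 * π))
    have hcast : ((⌈(φ + π) * (20 * (n:ℝ)) / (2 * π)⌉ : ℤ) : ℝ)
        = ((⌈(φ' + π) * (20 * (n:ℝ)) / (2 * π)⌉ : ℤ) : ℝ) := by exact_mod_cast hfe
    have h2π : (0 : ℝ) < 2 * π := by linarith
    have h20 : (0 : ℝ) < 20 * (n:ℝ) := by positivity
    have hd1 : (φ - φ') * (20 * (n:ℝ)) < 2 * π := by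
      have hlt : ((φ + π) * (20 * (n:ℝ)) - (φ' + π) * (20 * (n:ℝ))) / (2 * π) < 1 := by
        rw [sub_div]
        linarith
      have := (div_lt_one h2π).mp hlt
      linarith
    have hd2 : (φ' - φ) * (20 * (n:ℝ)) < 2 * π := by
      have hlt : ((φ' + π) * (20 * (n:ℝ)) - (φ + π) * (20 * (n:ℝ))) / (2 * π) < 1 := by
        rw [sub_div]
        linarith
      have := (div_lt_one h2π).mp hlt
      linarith
    have e1 : φ - φ' ≤ 2 * π / (20 * (n:ℝ)) := by
      rw [le_div_iff₀ h20]; exact hd1.le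
    have e2 : φ' - φ ≤ 2 * π / (20 * (n:ℝ)) := by
      rw [le_div_iff₀ h20]; exact hd2.le
    have hδ : |φ - φ'| ≤ 2 * π / (20 * (n:ℝ)) := abs_le.mpr ⟨by linarith, e1⟩
    have hkey := annulus_key q n hn hq hq2 (geoDist x y) (geoDist x y') (φ - φ')
      (Real.arccos_nonneg _) (Real.arccos_le_pi _)
      (Real.arccos_nonneg _) (Real.arccos_le_pi _)
      hylo hyhi hy'lo hy'hi hδ
    have hiy := hinner y hyX y' hy'X
    have hle := hsep' y hyX y' hy'X hne
    rw [hiy] at hle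
    linarith
  have hcard := Finset.card_le_card_of_injOn f hmaps hinj
  have hIcc : (Finset.Icc (1 : ℤ) (20 * n)).card = 20 * n := by
    rw [Int.card_Icc]
    omega
  calc ((S.card : ℝ)) ≤ (((Finset.Icc (1 : ℤ) (20 * n)).card : ℕ) : ℝ) := by
        exact_mod_cast hcard
    _ = 20 * (n : ℝ) := by rw [hIcc]; push_cast; ring
    _ ≤ 9 * π ^ 2 * n := by
        have h9 : (9:ℝ) ≤ π ^ 2 := by nlinarith [Real.pi_gt_three]
        have h9n := mul_le_mul_of_nonneg_right h9 hn0.le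
        linarith
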